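/- arXiv:2102.11644 — 2 statements merged into one kernel-verified Lean document; each statement's English description precedes it below -/
import Mathlib

section
/- For every nonzero real c and every natural number α, the weighted shifted Gaussian moment tends to zero for large averaging windows: lim_{T → ∞} e^{-c²T²/2} · R_α(T,c) = 0. -/
open MeasureTheory Filter Topology

/-- Shifted Gaussian moment `R_α(T,c) = (2πT²)^{-1/2} ∫ e^{-s²/(2T²)} (s + icT²)^α ds`. -/
noncomputable def shiftedMoment (T c : ℝ) (α : ℕ) : ℂ :=
  ((Real.sqrt (2 * Real.pi * T ^ 2) : ℝ) : ℂ)⁻¹ *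
    ∫ s : ℝ, Complex.exp (-(s : ℂ) ^ 2 / (2 * (T : ℂ) ^ 2)) *
      ((s : ℂ) + Complex.I * c * T ^ 2) ^ α

/-! Substituting `s = T u` turns `R_α(T,c)` into a standard Gaussian average of `(T u + i c T²)^α`,
and for `T ≥ 1` the integrand is bounded by `T^{2α} (|u| + |c|)^α e^{-u²/2}`, so
`R_α(T,c) = O(T^{2α})`.
The weight `e^{-c²T²/2}` beats any polynomial once `c ≠ 0`. -/

open Real Asymptotics

theorem integrable_abs_pow_mul_exp_neg_mul_sq {b : ℝ} (hb : 0 < b) (n : ℕ) :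
    Integrable fun x : ℝ => |x| ^ n * exp (-b * x ^ 2) := by
  refine (integrable_rpow_mul_exp_neg_mul_sq hb (s := n)
    (neg_one_lt_zero.trans_le n.cast_nonneg)).abs.congr
    (Eventually.of_forall fun x => ?_)
  simp only [rpow_natCast, abs_mul, abs_pow, abs_of_pos (exp_pos _)]

theorem integrable_abs_add_pow_mul_exp_neg_mul_sq {b : ℝ} (hb : 0 < b) (a : ℝ) (n : ℕ) :
    Integrable fun x : ℝ => (|x| + a) ^ n * exp (-b * x ^ 2) := by
  have hexpand : (fun x : ℝ => (|x| + a) ^ n * exp (-b * x ^ 2)) = fun x =>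
      ∑ k ∈ Finset.range (n + 1), a ^ (n - k) * n.choose k * (|x| ^ k * exp (-b * x ^ 2)) := by
    funext x
    rw [add_pow, Finset.sum_mul]
    exact Finset.sum_congr rfl fun k _ => by ring
  rw [hexpand]
  exact integrable_finsetSum _ fun k _ =>
    (integrable_abs_pow_mul_exp_neg_mul_sq hb k).const_mul _

theorem tendsto_sq_pow_mul_exp_neg_mul_sq {b : ℝ} (hb : 0 < b) (n : ℕ) :
    Tendsto (fun x : ℝ => (x ^ 2) ^ n * exp (-b * x ^ 2)) atTop (𝓝 0) := by
  have h := (tendsto_rpow_mul_exp_neg_mul_atTop_nhds_zero n b hb).comp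
    (tendsto_pow_atTop two_ne_zero)
  simpa only [Function.comp_def, rpow_natCast] using h

theorem shiftedMoment_eq_integral_exp_neg_half_sq {T : ℝ} (hT : 0 < T) (c : ℝ) (α : ℕ) :
    shiftedMoment T c α = ((√(2 * π) : ℝ) : ℂ)⁻¹ *
      ∫ u : ℝ, (exp (-(1 / 2) * u ^ 2) : ℂ) * (T * u + Complex.I * c * T ^ 2) ^ α := by
  set F : ℝ → ℂ := fun s => Complex.exp (-(s : ℂ) ^ 2 / (2 * (T : ℂ) ^ 2)) *
    ((s : ℂ) + Complex.I * c * T ^ 2) ^ α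
  have hscale : ∫ u : ℝ, F (T * u) = |T⁻¹| • ∫ s : ℝ, F s :=
    Measure.integral_comp_mul_left F T
  have hF : ∀ u : ℝ,
      F (T * u) = (exp (-(1 / 2) * u ^ 2) : ℂ) * (T * u + Complex.I * c * T ^ 2) ^ α := by
    intro u
    have hT' : (T : ℂ) ≠ 0 := by exact_mod_cast hT.ne'
    simp only [F, Complex.ofReal_exp, Complex.ofReal_mul]
    congr 2
    push_cast
    field_simp
  change ((√(2 * π * T ^ 2) : ℝ) : ℂ)⁻¹ * ∫ s, F s = _
  rw [← integral_congr_ae (Eventually.of_forall hF), hscale,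
    sqrt_mul (by positivity), sqrt_sq hT.le, abs_inv, abs_of_pos hT, Complex.real_smul]
  push_cast
  field_simp

theorem norm_ofReal_mul_add_I_mul_sq_le {T : ℝ} (hT : 1 ≤ T) (c u : ℝ) :
    ‖(T : ℂ) * u + Complex.I * c * T ^ 2‖ ≤ (|u| + |c|) * T ^ 2 := by
  have hTT : T * |u| ≤ T ^ 2 * |u| := by gcongr; nlinarith
  calc ‖(T : ℂ) * u + Complex.I * c * T ^ 2‖
      ≤ ‖(T : ℂ) * u‖ + ‖Complex.I * c * T ^ 2‖ := norm_add_le _ _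
    _ = T * |u| + |c| * T ^ 2 := by
      simp [Complex.norm_real, abs_of_pos (zero_lt_one.trans_le hT)]
    _ ≤ (|u| + |c|) * T ^ 2 := by linarith

theorem norm_shiftedMoment_le {T : ℝ} (hT : 1 ≤ T) (c : ℝ) (α : ℕ) :
    ‖shiftedMoment T c α‖ ≤
      (√(2 * π))⁻¹ * (∫ u : ℝ, (|u| + |c|) ^ α * exp (-(1 / 2) * u ^ 2)) * (T ^ 2) ^ α := by
  rw [shiftedMoment_eq_integral_exp_neg_half_sq (zero_lt_one.trans_le hT), norm_mul, norm_inv,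
    Complex.norm_real, norm_of_nonneg (sqrt_nonneg _), mul_assoc (√(2 * π))⁻¹,
    ← integral_mul_const]
  gcongr
  refine norm_integral_le_of_norm_le
    ((integrable_abs_add_pow_mul_exp_neg_mul_sq (by norm_num) _ α).mul_const _)
    (Eventually.of_forall fun u => ?_)
  calc ‖(exp (-(1 / 2) * u ^ 2) : ℂ) * (T * u + Complex.I * c * T ^ 2) ^ α‖
      = ‖(T : ℂ) * u + Complex.I * c * T ^ 2‖ ^ α * exp (-(1 / 2) * u ^ 2) := by
        rw [norm_mul, norm_pow, Complex.norm_real, norm_of_nonneg (exp_pos _).le, mul_comm]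
    _ ≤ ((|u| + |c|) * T ^ 2) ^ α * exp (-(1 / 2) * u ^ 2) := by
        gcongr
        exact norm_ofReal_mul_add_I_mul_sq_le hT c u
    _ = (|u| + |c|) ^ α * exp (-(1 / 2) * u ^ 2) * (T ^ 2) ^ α := by rw [mul_pow]; ring

theorem isBigO_shiftedMoment_atTop (c : ℝ) (α : ℕ) :
    (fun T => shiftedMoment T c α) =O[atTop] fun T => (T ^ 2) ^ α :=
  IsBigO.of_bound _ <| (eventually_ge_atTop 1).mono fun T hT => by
    simpa only [norm_pow, norm_eq_abs, sq_abs] using norm_shiftedMoment_le hT c α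

theorem weighted_shiftedMoment_tendsto_zero (c : ℝ) (hc : c ≠ 0) (α : ℕ) :
    Tendsto (fun T : ℝ =>
        Complex.exp (-((c : ℂ) ^ 2 * (T : ℂ) ^ 2) / 2) * shiftedMoment T c α)
      atTop (𝓝 0) := by
  have hweight : (fun T : ℝ => Complex.exp (-((c : ℂ) ^ 2 * (T : ℂ) ^ 2) / 2)) =O[atTop]
      fun T => exp (-(c ^ 2 / 2) * T ^ 2) :=
    isBigO_of_le _ fun T => le_of_eq <| by
      rw [Complex.norm_exp, norm_of_nonneg (exp_pos _).le]
      norm_cast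
      ring_nf
  refine (hweight.mul (isBigO_shiftedMoment_atTop c α)).trans_tendsto ?_
  simpa only [mul_comm] using
    tendsto_sq_pow_mul_exp_neg_mul_sq (half_pos (sq_pos_of_ne_zero hc)) α
end

section
/- For every nonzero real T, in the resonant case c = 0 the inverse mass matrix applied to consecutive triples of shifted Gaussian moments gives: M(T)^{-1}(R_0, R_1, R_2)ᵀ = (1, 0, 0)ᵀ, M(T)^{-1}(R_1, R_2, R_3)ᵀ = (0, 1, 0)ᵀ, M(T)^{-1}(R_2, R_3, R_4)ᵀ = (0, 0, 1)ᵀ, M(T)^{-1}(R_3, R_4, R_5)ᵀ = (0, 3T², 0)ᵀ, and M(T)^{-1}(R_4, R_5, R_6)ᵀ = (−3T⁴, 0, 6T²)ᵀ, where R_α = R_α(T,0). Consequently, in the limit T → ∞ the degree-2 phase-averaged system reduces to V̇₀ = Σ_m (F_{m,0,0} − 3T⁴ F_{m,2,2}), V̇₁ = Σ_m (2F_{m,0,1} + 6T² F_{m,1,2}), V̇₂ = Σ_m (F_{m,1,1} + 2F_{m,0,2} + 6T² F_{m,2,2}), the sum running over resonant terms only. -/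
/-!
At `c = 0` the moment `R_α(T, 0)` is the `α`-th moment of the centred normal law of variance
`T²`: it vanishes for odd `α`, and integrating `s ↦ s ^ (n + 1) e^{-s²/(2T²)}` by parts gives
`R_{n+2} = (n + 1) T² R_n`, so `R_0, …, R_6 = 1, 0, T², 0, 3T⁴, 0, 15T⁶`. Since
`det M(T) = 2T⁶ ≠ 0`, each identity `M(T)⁻¹ v = w` is checked as `v = M(T) w`.
-/

open Matrix

/-- The degree-2 phase-averaging mass matrix with Gaussian weight. -/
noncomputable def massMatrix (T : ℝ) : Matrix (Fin 3) (Fin 3) ℝ :=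
  !![1, 0, T ^ 2; 0, T ^ 2, 0; T ^ 2, 0, 3 * T ^ 4]

/-- The mass matrix viewed as a complex matrix. -/
noncomputable def massMatrixC (T : ℝ) : Matrix (Fin 3) (Fin 3) ℂ :=
  (massMatrix T).map Complex.ofReal

open MeasureTheory Real Filter

noncomputable def gaussianMoment (b : ℝ) (n : ℕ) : ℝ := ∫ x : ℝ, x ^ n * exp (-b * x ^ 2)

lemma integrable_pow_mul_exp_neg_mul_sq {b : ℝ} (hb : 0 < b) (n : ℕ) :
    Integrable (fun x : ℝ => x ^ n * exp (-b * x ^ 2)) := by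
  simpa [rpow_natCast] using
    integrable_rpow_mul_exp_neg_mul_sq hb (s := n) (neg_one_lt_zero.trans_le n.cast_nonneg)

lemma tendsto_pow_mul_exp_neg_mul_sq_cocompact {b : ℝ} (hb : 0 < b) (n : ℕ) :
    Tendsto (fun x : ℝ => x ^ n * exp (-b * x ^ 2)) (cocompact ℝ) (nhds 0) := by
  rw [tendsto_zero_iff_norm_tendsto_zero]
  refine (tendsto_rpow_abs_mul_exp_neg_mul_sq_cocompact hb n).congr fun x => ?_
  rw [norm_mul, norm_pow, Real.norm_eq_abs, Real.norm_of_nonneg (exp_pos _).le, rpow_natCast]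

lemma gaussianMoment_zero (b : ℝ) : gaussianMoment b 0 = √(π / b) := by
  simpa [gaussianMoment] using integral_gaussian b

lemma gaussianMoment_of_odd (b : ℝ) {n : ℕ} (hn : Odd n) : gaussianMoment b n = 0 := by
  have h : gaussianMoment b n = -gaussianMoment b n :=
    calc gaussianMoment b n = ∫ x : ℝ, (-x) ^ n * exp (-b * (-x) ^ 2) :=
          (integral_neg_eq_self _ _).symm
      _ = ∫ x : ℝ, -(x ^ n * exp (-b * x ^ 2)) := by
          congr 1 with x
          rw [hn.neg_pow, neg_sq, neg_mul]
      _ = -gaussianMoment b n := integral_neg _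
  linarith

lemma hasDerivAt_pow_succ_mul_exp_neg_mul_sq (b : ℝ) (n : ℕ) (x : ℝ) :
    HasDerivAt (fun x : ℝ => x ^ (n + 1) * exp (-b * x ^ 2))
      ((n + 1) * (x ^ n * exp (-b * x ^ 2)) - 2 * b * (x ^ (n + 2) * exp (-b * x ^ 2))) x := by
  have hpow : HasDerivAt (fun x : ℝ => x ^ (n + 1)) ((n + 1) * x ^ n) x := by
    simpa using hasDerivAt_pow (n + 1) x
  have hexp := ((hasDerivAt_pow 2 x).const_mul (-b)).exp
  refine (hpow.mul hexp).congr_deriv ?_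
  norm_num
  ring

lemma gaussianMoment_add_two {b : ℝ} (hb : 0 < b) (n : ℕ) :
    gaussianMoment b (n + 2) = (n + 1) / (2 * b) * gaussianMoment b n := by
  have hint := integrable_pow_mul_exp_neg_mul_sq hb
  have hlim := tendsto_pow_mul_exp_neg_mul_sq_cocompact hb (n + 1)
  rw [cocompact_eq_atBot_atTop] at hlim
  have hparts := integral_of_hasDerivAt_of_tendsto
    (hasDerivAt_pow_succ_mul_exp_neg_mul_sq b n)
    (((hint n).const_mul _).sub ((hint (n + 2)).const_mul _))
    (hlim.mono_left le_sup_left) (hlim.mono_left le_sup_right)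
  rw [integral_sub ((hint n).const_mul _) ((hint (n + 2)).const_mul _), integral_const_mul,
    integral_const_mul, sub_zero] at hparts
  change (n + 1) * gaussianMoment b n - 2 * b * gaussianMoment b (n + 2) = 0 at hparts
  field_simp
  linear_combination -hparts

lemma shiftedMoment_zero_eq_gaussianMoment (T : ℝ) (α : ℕ) :
    shiftedMoment T 0 α = ((√(2 * π * T ^ 2))⁻¹ * gaussianMoment (2 * T ^ 2)⁻¹ α : ℝ) := by
  rw [shiftedMoment, gaussianMoment, Complex.ofReal_mul, Complex.ofReal_inv,
    ← integral_complex_ofReal]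
  congr 2 with s
  push_cast
  ring_nf

lemma shiftedMoment_zero_of_odd (T : ℝ) {α : ℕ} (hα : Odd α) : shiftedMoment T 0 α = 0 := by
  simp [shiftedMoment_zero_eq_gaussianMoment, gaussianMoment_of_odd _ hα]

lemma shiftedMoment_zero_zero {T : ℝ} (hT : T ≠ 0) : shiftedMoment T 0 0 = 1 := by
  have hpos : 0 < √(2 * π * T ^ 2) := by positivity
  rw [shiftedMoment_zero_eq_gaussianMoment, gaussianMoment_zero, div_inv_eq_mul,
    show π * (2 * T ^ 2) = 2 * π * T ^ 2 by ring, inv_mul_cancel₀ hpos.ne', Complex.ofReal_one]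

lemma shiftedMoment_zero_add_two {T : ℝ} (hT : T ≠ 0) (n : ℕ) :
    shiftedMoment T 0 (n + 2) = (n + 1) * (T : ℂ) ^ 2 * shiftedMoment T 0 n := by
  rw [shiftedMoment_zero_eq_gaussianMoment, shiftedMoment_zero_eq_gaussianMoment,
    gaussianMoment_add_two (by positivity)]
  push_cast
  field_simp

lemma shiftedMoment_zero_two {T : ℝ} (hT : T ≠ 0) : shiftedMoment T 0 2 = (T : ℂ) ^ 2 := by
  simpa [shiftedMoment_zero_zero hT] using shiftedMoment_zero_add_two hT 0

lemma shiftedMoment_zero_four {T : ℝ} (hT : T ≠ 0) : shiftedMoment T 0 4 = 3 * (T : ℂ) ^ 4 := by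
  rw [shiftedMoment_zero_add_two hT 2, shiftedMoment_zero_two hT]
  push_cast
  ring

lemma shiftedMoment_zero_six {T : ℝ} (hT : T ≠ 0) : shiftedMoment T 0 6 = 15 * (T : ℂ) ^ 6 := by
  rw [shiftedMoment_zero_add_two hT 4, shiftedMoment_zero_four hT]
  push_cast
  ring

lemma det_massMatrixC (T : ℝ) : (massMatrixC T).det = 2 * (T : ℂ) ^ 6 := by
  simp [massMatrixC, massMatrix, det_fin_three]
  ring

lemma massMatrixC_mulVec (T : ℝ) (w : Fin 3 → ℂ) :
    massMatrixC T *ᵥ w = ![w 0 + T ^ 2 * w 2, T ^ 2 * w 1, T ^ 2 * w 0 + 3 * T ^ 4 * w 2] := by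
  ext j
  fin_cases j <;> simp [massMatrixC, massMatrix, mulVec, dotProduct, Fin.sum_univ_three]

lemma massMatrixC_inv_mulVec_eq {T : ℝ} (hT : T ≠ 0) {v w : Fin 3 → ℂ}
    (h : v = massMatrixC T *ᵥ w) : (massMatrixC T)⁻¹ *ᵥ v = w :=
  have : Invertible (massMatrixC T) := invertibleOfIsUnitDet _ <| by
    simp [det_massMatrixC, hT]
  inv_mulVec_eq_vec h

lemma massMatrixC_inv_mulVec_quadraticMoments {T : ℝ} (hT : T ≠ 0) (G : Fin 3 → Fin 3 → ℂ)
    (hG : ∀ k l, G k l = G l k) :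
    (massMatrixC T)⁻¹ *ᵥ (fun j => ∑ k : Fin 3, ∑ l : Fin 3,
        G k l * shiftedMoment T 0 ((j : ℕ) + (k : ℕ) + (l : ℕ))) =
      ![G 0 0 - 3 * (T : ℂ) ^ 4 * G 2 2, 2 * G 0 1 + 6 * (T : ℂ) ^ 2 * G 1 2,
        G 1 1 + 2 * G 0 2 + 6 * (T : ℂ) ^ 2 * G 2 2] := by
  refine massMatrixC_inv_mulVec_eq hT ?_
  ext j
  fin_cases j <;>
    simp [massMatrixC_mulVec, Fin.sum_univ_three, shiftedMoment_zero_zero hT,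
      shiftedMoment_zero_two hT, shiftedMoment_zero_four hT, shiftedMoment_zero_six hT,
      shiftedMoment_zero_of_odd, Nat.odd_iff, hG 1 0, hG 2 0, hG 2 1] <;>
    ring

theorem resonant_invMass_moment_identities (T : ℝ) (hT : T ≠ 0) :
    (massMatrixC T)⁻¹.mulVec
        ![shiftedMoment T 0 0, shiftedMoment T 0 1, shiftedMoment T 0 2] = ![1, 0, 0] ∧
    (massMatrixC T)⁻¹.mulVec
        ![shiftedMoment T 0 1, shiftedMoment T 0 2, shiftedMoment T 0 3] = ![0, 1, 0] ∧
    (massMatrixC T)⁻¹.mulVec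
        ![shiftedMoment T 0 2, shiftedMoment T 0 3, shiftedMoment T 0 4] = ![0, 0, 1] ∧
    (massMatrixC T)⁻¹.mulVec
        ![shiftedMoment T 0 3, shiftedMoment T 0 4, shiftedMoment T 0 5] =
      ![0, 3 * (T : ℂ) ^ 2, 0] ∧
    (massMatrixC T)⁻¹.mulVec
        ![shiftedMoment T 0 4, shiftedMoment T 0 5, shiftedMoment T 0 6] =
      ![-3 * (T : ℂ) ^ 4, 0, 6 * (T : ℂ) ^ 2] ∧
    -- Consequently, keeping only resonant terms (c = 0), the degree-2 phase-averaged
    -- system reduces to the stated equations.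
    ∀ (ι : Type) [Fintype ι], ∀ F : ι → Fin 3 → Fin 3 → ℂ,
      (∀ m k l, F m k l = F m l k) →
      (massMatrixC T)⁻¹.mulVec
          (fun j => ∑ m, ∑ k : Fin 3, ∑ l : Fin 3,
            F m k l * shiftedMoment T 0 ((j : ℕ) + (k : ℕ) + (l : ℕ))) =
        ![∑ m, (F m 0 0 - 3 * (T : ℂ) ^ 4 * F m 2 2),
          ∑ m, (2 * F m 0 1 + 6 * (T : ℂ) ^ 2 * F m 1 2),
          ∑ m, (F m 1 1 + 2 * F m 0 2 + 6 * (T : ℂ) ^ 2 * F m 2 2)] := by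
  refine ⟨massMatrixC_inv_mulVec_eq hT ?_, massMatrixC_inv_mulVec_eq hT ?_,
    massMatrixC_inv_mulVec_eq hT ?_, massMatrixC_inv_mulVec_eq hT ?_,
    massMatrixC_inv_mulVec_eq hT ?_, fun ι _ F hF => ?_⟩
  iterate 5
    ext j
    fin_cases j <;>
      simp [massMatrixC_mulVec, shiftedMoment_zero_zero hT, shiftedMoment_zero_two hT,
        shiftedMoment_zero_four hT, shiftedMoment_zero_six hT, shiftedMoment_zero_of_odd,
        Nat.odd_iff] <;>
      ring
  rw [← Finset.sum_fn, mulVec_sum]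
  simp_rw [massMatrixC_inv_mulVec_quadraticMoments hT _ (hF _)]
  ext i
  fin_cases i <;> simp [Finset.sum_apply]
end
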